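/- arXiv:math/0401123 — 4 statements merged into one kernel-verified Lean document; each statement's English description precedes it below -/
import Mathlib

section
/- Suppose z₁, z₂, z₃ : ℝ → ℂ are differentiable and satisfy z₁' = 2·conj(z₂ z₃), z₂' = -2·conj(z₃ z₁), z₃' = -2·conj(z₁ z₂). Then |z₁(t)|² + |z₂(t)|² is constant, and |z₁(t)|² + |z₃(t)|² is constant. -/
/-!
Since `(‖z‖²)' = 2 Re (conj z · z')`, each equation `zᵢ' = ±2 conj (zⱼ zₖ)` gives
`(‖zᵢ‖²)' = ±4 Re (z₁ z₂ z₃)`. The sign of `z₁` is opposite to those of `z₂` and `z₃`,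
so in `‖z₁‖² + ‖z₂‖²` and `‖z₁‖² + ‖z₃‖²` the derivatives cancel.
-/

open ComplexConjugate

lemma HasDerivAt.norm_sq_of_eq_conj {z : ℝ → ℂ} {w : ℂ} {c : ℝ} {t : ℝ}
    (h : HasDerivAt z (c * conj w) t) :
    HasDerivAt (fun t => ‖z t‖ ^ 2) (2 * c * (z t * w).re) t := by
  convert h.norm_sq using 1
  rw [Complex.inner, mul_assoc (c : ℂ), ← map_mul, Complex.re_ofReal_mul, Complex.conj_re,
    mul_comm w]
  ring

lemma add_norm_sq_eq_of_hasDerivAt_neg {u v : ℝ → ℂ} {g : ℝ → ℝ}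
    (hu : ∀ t, HasDerivAt (fun t => ‖u t‖ ^ 2) (g t) t)
    (hv : ∀ t, HasDerivAt (fun t => ‖v t‖ ^ 2) (-g t) t) (s t : ℝ) :
    ‖u s‖ ^ 2 + ‖v s‖ ^ 2 = ‖u t‖ ^ 2 + ‖v t‖ ^ 2 := by
  have hzero (t : ℝ) : HasDerivAt (fun t => ‖u t‖ ^ 2 + ‖v t‖ ^ 2) 0 t := by
    exact ((hu t).add (hv t)).congr_deriv (add_neg_cancel _)
  exact is_const_of_deriv_eq_zero (fun t => (hzero t).differentiableAt)
    (fun t => (hzero t).deriv) s t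

/-- For solutions of the reduced evolution equations, |z₁|² + |z₂|² and
|z₁|² + |z₃|² are constant. -/
theorem sum_norm_sq_constant (z₁ z₂ z₃ : ℝ → ℂ)
    (h1 : ∀ t : ℝ, HasDerivAt z₁ (2 * (starRingEnd ℂ) (z₂ t * z₃ t)) t)
    (h2 : ∀ t : ℝ, HasDerivAt z₂ (-2 * (starRingEnd ℂ) (z₃ t * z₁ t)) t)
    (h3 : ∀ t : ℝ, HasDerivAt z₃ (-2 * (starRingEnd ℂ) (z₁ t * z₂ t)) t) :
    (∀ s t : ℝ, ‖z₁ s‖ ^ 2 + ‖z₂ s‖ ^ 2 = ‖z₁ t‖ ^ 2 + ‖z₂ t‖ ^ 2) ∧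
    (∀ s t : ℝ, ‖z₁ s‖ ^ 2 + ‖z₃ s‖ ^ 2 = ‖z₁ t‖ ^ 2 + ‖z₃ t‖ ^ 2) := by
  set P : ℝ → ℝ := fun t => 4 * (z₁ t * z₂ t * z₃ t).re
  have d1 (t : ℝ) : HasDerivAt (fun t => ‖z₁ t‖ ^ 2) (P t) t := by
    convert HasDerivAt.norm_sq_of_eq_conj (c := 2) (by exact_mod_cast h1 t) using 1
    simp only [P]; ring_nf
  have d2 (t : ℝ) : HasDerivAt (fun t => ‖z₂ t‖ ^ 2) (-P t) t := by
    convert HasDerivAt.norm_sq_of_eq_conj (c := -2) (by exact_mod_cast h2 t) using 1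
    simp only [P]; ring_nf
  have d3 (t : ℝ) : HasDerivAt (fun t => ‖z₃ t‖ ^ 2) (-P t) t := by
    convert HasDerivAt.norm_sq_of_eq_conj (c := -2) (by exact_mod_cast h3 t) using 1
    simp only [P]; ring_nf
  exact ⟨add_norm_sq_eq_of_hasDerivAt_neg d1 d2, add_norm_sq_eq_of_hasDerivAt_neg d1 d3⟩
end

section
/- Suppose z₁, z₂, z₃ : ℝ → ℂ are differentiable and satisfy z₁' = 2·conj(z₂ z₃), z₂' = -2·conj(z₃ z₁), z₃' = -2·conj(z₁ z₂). Then Im(z₁(t) z₂(t) z₃(t)) is constant in t. -/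
/-!
Differentiating `z₁ z₂ z₃` by the product rule, each of the three terms is `±2` times a squared
modulus, e.g. `z₁' z₂ z₃ = 2 conj (z₂ z₃) (z₂ z₃) = 2 |z₂ z₃|²`. So the product has a real
derivative, and its imaginary part is constant.
-/

open Complex ComplexConjugate

theorem Complex.im_eq_of_hasDerivAt_ofReal {f : ℝ → ℂ} {f' : ℝ → ℝ}
    (hf : ∀ t, HasDerivAt f (f' t) t) (s t : ℝ) : (f s).im = (f t).im := by
  have him : ∀ t, HasDerivAt (fun t => (f t).im) 0 t := fun t => by
    have := imCLM.hasFDerivAt.comp_hasDerivAt t (hf t)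
    simp only [imCLM_apply, ofReal_im] at this
    exact this
  exact is_const_of_deriv_eq_zero (fun x => (him x).differentiableAt) (fun x => (him x).deriv) s t

theorem hasDerivAt_mul_mul_of_conj_system {z₁ z₂ z₃ : ℝ → ℂ} {t : ℝ}
    (h1 : HasDerivAt z₁ (2 * conj (z₂ t * z₃ t)) t)
    (h2 : HasDerivAt z₂ (-2 * conj (z₃ t * z₁ t)) t)
    (h3 : HasDerivAt z₃ (-2 * conj (z₁ t * z₂ t)) t) :
    HasDerivAt (fun t => z₁ t * z₂ t * z₃ t)
      ((2 * normSq (z₂ t * z₃ t) - 2 * normSq (z₃ t * z₁ t) - 2 * normSq (z₁ t * z₂ t) : ℝ)) t := by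
  refine ((h1.mul h2).mul h3).congr_deriv ?_
  push_cast [← mul_conj, Pi.mul_apply]
  ring

/-- For solutions of the reduced evolution equations, Im(z₁ z₂ z₃) is constant. -/
theorem im_product_constant (z₁ z₂ z₃ : ℝ → ℂ)
    (h1 : ∀ t : ℝ, HasDerivAt z₁ (2 * (starRingEnd ℂ) (z₂ t * z₃ t)) t)
    (h2 : ∀ t : ℝ, HasDerivAt z₂ (-2 * (starRingEnd ℂ) (z₃ t * z₁ t)) t)
    (h3 : ∀ t : ℝ, HasDerivAt z₃ (-2 * (starRingEnd ℂ) (z₁ t * z₂ t)) t) :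
    ∀ s t : ℝ, (z₁ s * z₂ s * z₃ s).im = (z₁ t * z₂ t * z₃ t).im :=
  Complex.im_eq_of_hasDerivAt_ofReal fun t =>
    hasDerivAt_mul_mul_of_conj_system (h1 t) (h2 t) (h3 t)
end

section
/- Let α₁, α₂, α₃ > 0 satisfy α₁⁻² = α₂⁻² + α₃⁻², define a₁ = -α₂α₃/α₁, a₂ = α₃α₁/α₂, a₃ = α₁α₂/α₃, and define z₁(t) = (i α₁/2) e^{i a₁ t}, z₂(t) = (α₂/2) e^{i a₂ t}, z₃(t) = (α₃/2) e^{i a₃ t}. Then these functions satisfy z₁' = 2·conj(z₂ z₃), z₂' = -2·conj(z₃ z₁), z₃' = -2·conj(z₁ z₂) for all t ∈ ℝ. -/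
lemma aux_deriv (c a : ℂ) (t : ℝ) :
    HasDerivAt (fun t : ℝ => c * Complex.exp (Complex.I * a * (t : ℂ)))
      (c * (Complex.I * a) * Complex.exp (Complex.I * a * (t : ℂ))) t := by
  have h1 : HasDerivAt (fun t : ℝ => (t : ℂ)) 1 t := Complex.ofRealCLM.hasDerivAt
  have h2 := ((h1.const_mul (Complex.I * a)).cexp).const_mul c
  simpa [mul_comm, mul_assoc, mul_left_comm] using h2

/-- The explicit functions z₁(t) = (iα₁/2)e^{ia₁t}, z₂(t) = (α₂/2)e^{ia₂t},
z₃(t) = (α₃/2)e^{ia₃t} solve the reduced evolution equations. -/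
theorem explicit_solution (α₁ α₂ α₃ : ℝ)
    (h₁ : 0 < α₁) (h₂ : 0 < α₂) (h₃ : 0 < α₃)
    (h : α₁⁻¹ ^ 2 = α₂⁻¹ ^ 2 + α₃⁻¹ ^ 2)
    (a₁ a₂ a₃ : ℝ)
    (ha₁ : a₁ = -(α₂ * α₃ / α₁)) (ha₂ : a₂ = α₃ * α₁ / α₂) (ha₃ : a₃ = α₁ * α₂ / α₃)
    (z₁ z₂ z₃ : ℝ → ℂ)
    (hz₁ : z₁ = fun t : ℝ => Complex.I * (α₁ : ℂ) / 2 * Complex.exp (Complex.I * (a₁ : ℂ) * (t : ℂ)))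
    (hz₂ : z₂ = fun t : ℝ => ((α₂ : ℂ) / 2) * Complex.exp (Complex.I * (a₂ : ℂ) * (t : ℂ)))
    (hz₃ : z₃ = fun t : ℝ => ((α₃ : ℂ) / 2) * Complex.exp (Complex.I * (a₃ : ℂ) * (t : ℂ)))
    (t : ℝ) :
    HasDerivAt z₁ (2 * (starRingEnd ℂ) (z₂ t * z₃ t)) t ∧
    HasDerivAt z₂ (-2 * (starRingEnd ℂ) (z₃ t * z₁ t)) t ∧
    HasDerivAt z₃ (-2 * (starRingEnd ℂ) (z₁ t * z₂ t)) t := by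
  have hne₁ : α₁ ≠ 0 := h₁.ne'
  have hne₂ : α₂ ≠ 0 := h₂.ne'
  have hne₃ : α₃ ≠ 0 := h₃.ne'
  have hsum : a₁ + a₂ + a₃ = 0 := by
    subst ha₁ ha₂ ha₃
    field_simp at h ⊢
    nlinarith [h]
  have k₁ : α₁ * a₁ = -(α₂ * α₃) := by rw [ha₁]; field_simp
  have k₂ : α₂ * a₂ = α₃ * α₁ := by rw [ha₂]; field_simp
  have k₃ : α₃ * a₃ = α₁ * α₂ := by rw [ha₃]; field_simp
  have hsumC : (a₁ : ℂ) + a₂ + a₃ = 0 := by exact_mod_cast hsum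
  have k₁C : (α₁ : ℂ) * a₁ = -((α₂ : ℂ) * α₃) := by exact_mod_cast k₁
  have k₂C : (α₂ : ℂ) * a₂ = (α₃ : ℂ) * α₁ := by exact_mod_cast k₂
  have k₃C : (α₃ : ℂ) * a₃ = (α₁ : ℂ) * α₂ := by exact_mod_cast k₃
  have conjE : ∀ a : ℝ, (starRingEnd ℂ) (Complex.exp (Complex.I * (a : ℂ) * t))
      = Complex.exp (-(Complex.I * (a : ℂ) * t)) := by
    intro a
    rw [← Complex.exp_conj]
    congr 1
    simp [Complex.conj_I]
  have hE : ∀ b c d : ℝ, (b : ℝ) + c + d = 0 →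
      Complex.exp (-(Complex.I * (c : ℂ) * t)) * Complex.exp (-(Complex.I * (d : ℂ) * t))
        = Complex.exp (Complex.I * (b : ℂ) * t) := by
    intro b c d hbcd
    rw [← Complex.exp_add]
    congr 1
    have : (b : ℂ) + c + d = 0 := by exact_mod_cast hbcd
    linear_combination (-(Complex.I) * (t : ℂ)) * this
  refine ⟨?_, ?_, ?_⟩
  · have hd := aux_deriv (Complex.I * (α₁ : ℂ) / 2) a₁ t
    rw [← hz₁] at hd
    convert hd using 1
    rw [hz₂, hz₃]
    simp only [map_mul, map_div₀, Complex.conj_ofNat, Complex.conj_ofReal, conjE]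
    have hE1 := hE a₁ a₂ a₃ hsum
    linear_combination ((α₂ : ℂ) * α₃ / 2) * hE1
      - ((α₁ : ℂ) * a₁ / 2) * Complex.exp (Complex.I * (a₁ : ℂ) * t) * Complex.I_mul_I
      + (Complex.exp (Complex.I * (a₁ : ℂ) * t) / 2) * k₁C
  · have hd := aux_deriv ((α₂ : ℂ) / 2) a₂ t
    rw [← hz₂] at hd
    convert hd using 1
    rw [hz₃, hz₁]
    simp only [map_mul, map_div₀, Complex.conj_ofNat, Complex.conj_ofReal, Complex.conj_I, conjE]
    have hE2 := hE a₂ a₃ a₁ (by linarith)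
    linear_combination (Complex.I * (α₃ : ℂ) * α₁ / 2) * hE2
      - (Complex.I * Complex.exp (Complex.I * (a₂ : ℂ) * t) / 2) * k₂C
  · have hd := aux_deriv ((α₃ : ℂ) / 2) a₃ t
    rw [← hz₃] at hd
    convert hd using 1
    rw [hz₁, hz₂]
    simp only [map_mul, map_div₀, Complex.conj_ofNat, Complex.conj_ofReal, Complex.conj_I, conjE]
    have hE3 := hE a₃ a₁ a₂ (by linarith)
    linear_combination (Complex.I * (α₁ : ℂ) * α₂ / 2) * hE3
      - (Complex.I * Complex.exp (Complex.I * (a₃ : ℂ) * t) / 2) * k₃C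
end

section
/- Let p, q be coprime positive integers with q > 2p, and let λ = p² - pq + q², a₁ = p² - q², a₂ = q² - 2pq, a₃ = 2pq - p². Then gcd(a₁, a₂, a₃) divides 3, and the greatest common divisor of a₁, a₂, a₃ equals the greatest common divisor of a₁, a₂, a₃, λ. -/
/-!
Write `a₂ = q (q - 2p)` and `a₃ = p (2q - p)`. A common divisor `d` of `a₂` and `a₃` is coprime
to `q` (it divides `p² - q · 2p` and `p ⊥ q`) and likewise to `p`, so it divides `q - 2p` and
`p - 2q`, hence `3q`, hence `3`. Then `λ = (q - 2p)(q + p) + 3p²` is divisible by `d` as well,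
so adjoining `λ` does not change the gcd.
-/

section CommRing

variable {R : Type*} [CommRing R] {p q d : R}

theorem IsCoprime.isCoprime_of_dvd_sq_sub_mul (hpq : IsCoprime p q) {k : R}
    (hd : d ∣ q ^ 2 - p * k) : IsCoprime d p := by
  have : IsCoprime p (q ^ 2 - p * k) := by
    simpa only [sub_eq_add_neg, mul_neg] using (hpq.pow_right (n := 2)).add_mul_left_right (-k)
  exact (this.of_isCoprime_of_dvd_right hd).symm

theorem IsCoprime.dvd_sub_two_mul (hpq : IsCoprime p q) (h₂ : d ∣ q ^ 2 - 2 * p * q)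
    (h₃ : d ∣ 2 * p * q - p ^ 2) : d ∣ q - 2 * p := by
  have hdq : IsCoprime d q :=
    hpq.symm.isCoprime_of_dvd_sq_sub_mul (k := 2 * p) (by rw [← dvd_neg]; convert h₃ using 1; ring)
  exact hdq.dvd_of_dvd_mul_left (by convert h₂ using 1; ring)

theorem IsCoprime.dvd_three (hpq : IsCoprime p q) (h₂ : d ∣ q ^ 2 - 2 * p * q)
    (h₃ : d ∣ 2 * p * q - p ^ 2) : d ∣ 3 := by
  have hdp : IsCoprime d p :=
    hpq.isCoprime_of_dvd_sq_sub_mul (k := 2 * q) (by convert h₂ using 1; ring)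
  have hq : d ∣ q - 2 * p := hpq.dvd_sub_two_mul h₂ h₃
  have hp : d ∣ p - 2 * q :=
    hpq.symm.dvd_sub_two_mul (by rw [← dvd_neg]; convert h₃ using 1; ring)
      (by rw [← dvd_neg]; convert h₂ using 1; ring)
  refine hdp.dvd_of_dvd_mul_right (dvd_neg.mp ?_)
  convert dvd_add (dvd_mul_of_dvd_right hq 2) hp using 1
  ring

theorem IsCoprime.dvd_sq_sub_mul_add_sq (hpq : IsCoprime p q) (h₂ : d ∣ q ^ 2 - 2 * p * q)
    (h₃ : d ∣ 2 * p * q - p ^ 2) : d ∣ p ^ 2 - p * q + q ^ 2 := by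
  have hq : d ∣ q - 2 * p := hpq.dvd_sub_two_mul h₂ h₃
  convert dvd_add (dvd_mul_of_dvd_left hq (q + p))
    (dvd_mul_of_dvd_left (hpq.dvd_three h₂ h₃) (p ^ 2)) using 1
  ring

end CommRing

theorem Int.gcd_gcd_gcd_of_gcd_dvd {a b c l : ℤ} (h : (Int.gcd a (Int.gcd b c : ℤ) : ℤ) ∣ l) :
    Int.gcd a (Int.gcd b (Int.gcd c l : ℤ) : ℤ) = Int.gcd a (Int.gcd b c : ℤ) := by
  rw [← Int.gcd_assoc b c l, ← Int.gcd_assoc]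
  exact_mod_cast Int.gcd_eq_left (Int.natCast_nonneg _) h

theorem gcd_divides_three_general (p q : ℕ) (hpq : Nat.Coprime p q)
    (a₁ a₂ a₃ lam : ℤ)
    (ha₂ : a₂ = (q : ℤ) ^ 2 - 2 * p * q)
    (ha₃ : a₃ = 2 * p * q - (p : ℤ) ^ 2)
    (hlam : lam = (p : ℤ) ^ 2 - p * q + (q : ℤ) ^ 2) :
    (Int.gcd a₁ (Int.gcd a₂ a₃ : ℤ) ∣ 3) ∧
    Int.gcd a₁ (Int.gcd a₂ a₃ : ℤ) = Int.gcd a₁ (Int.gcd a₂ (Int.gcd a₃ lam : ℤ) : ℤ) := by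
  set g : ℕ := Int.gcd a₁ (Int.gcd a₂ a₃ : ℤ)
  have hpq' : IsCoprime (p : ℤ) q := Nat.isCoprime_iff_coprime.mpr hpq
  have hg₂₃ : (g : ℤ) ∣ Int.gcd a₂ a₃ := Int.gcd_dvd_right _ _
  have h₂ : (g : ℤ) ∣ (q : ℤ) ^ 2 - 2 * p * q := ha₂ ▸ hg₂₃.trans (Int.gcd_dvd_left _ _)
  have h₃ : (g : ℤ) ∣ 2 * p * q - (p : ℤ) ^ 2 := ha₃ ▸ hg₂₃.trans (Int.gcd_dvd_right _ _)
  refine ⟨by exact_mod_cast hpq'.dvd_three h₂ h₃, (Int.gcd_gcd_gcd_of_gcd_dvd ?_).symm⟩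
  exact hlam ▸ hpq'.dvd_sq_sub_mul_add_sq h₂ h₃

/-- For coprime positive integers p, q with q > 2p, gcd(a₁,a₂,a₃) divides 3 and
gcd(a₁,a₂,a₃) = gcd(a₁,a₂,a₃,λ). -/
theorem gcd_divides_three (p q : ℕ) (hp : 0 < p) (hpq : Nat.Coprime p q)
    (hq : 2 * p < q)
    (a₁ a₂ a₃ lam : ℤ)
    (ha₁ : a₁ = (p : ℤ) ^ 2 - (q : ℤ) ^ 2)
    (ha₂ : a₂ = (q : ℤ) ^ 2 - 2 * p * q)
    (ha₃ : a₃ = 2 * p * q - (p : ℤ) ^ 2)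
    (hlam : lam = (p : ℤ) ^ 2 - p * q + (q : ℤ) ^ 2) :
    (Int.gcd a₁ (Int.gcd a₂ a₃ : ℤ) ∣ 3) ∧
    Int.gcd a₁ (Int.gcd a₂ a₃ : ℤ) = Int.gcd a₁ (Int.gcd a₂ (Int.gcd a₃ lam : ℤ) : ℤ) :=
  gcd_divides_three_general p q hpq a₁ a₂ a₃ lam ha₂ ha₃ hlam
end
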